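/- For every z in the open unit disc of ℂ with z ≠ 0, (1/π) ∫∫_{|ζ|<1} (ζ̄ z)/(ζ(ζ − z)) dξdη = − z̄²/2. -/

import Mathlib

open MeasureTheory Metric ComplexConjugate

section aux
open Set Real intervalIntegral

lemma partial_frac {K : Type*} [Field K] (a b : K) (ha : a ≠ 0) (hb : b ≠ 0) (hab : b - a ≠ 0) :
    (b^3*(b-a))⁻¹ = 1/a^3*(b-a)⁻¹ - 1/a^3*b⁻¹ - 1/a^2*(b^2)⁻¹ - 1/a*(b^3)⁻¹ := by
  have ha2 : a^2 ≠ 0 := pow_ne_zero _ ha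
  have ha3 : a^3 ≠ 0 := pow_ne_zero _ ha
  have hb2 : b^2 ≠ 0 := pow_ne_zero _ hb
  have hb3 : b^3 ≠ 0 := pow_ne_zero _ hb
  have e1 : 1/a^3*(b-a)⁻¹ = 1/(a^3*(b-a)) := by rw [one_div, one_div, ← mul_inv]
  have e2 : 1/a^3*b⁻¹ = 1/(a^3*b) := by rw [one_div, one_div, ← mul_inv]
  have e3 : 1/a^2*(b^2)⁻¹ = 1/(a^2*b^2) := by rw [one_div, one_div, ← mul_inv]
  have e4 : 1/a*(b^3)⁻¹ = 1/(a*b^3) := by rw [one_div, one_div, ← mul_inv]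
  rw [e1, e2, e3, e4, inv_eq_one_div,
    div_sub_div _ _ (mul_ne_zero ha3 hab) (mul_ne_zero ha3 hb),
    div_sub_div _ _ (mul_ne_zero (mul_ne_zero ha3 hab) (mul_ne_zero ha3 hb)) (mul_ne_zero ha2 hb2),
    div_sub_div _ _ (mul_ne_zero (mul_ne_zero (mul_ne_zero ha3 hab) (mul_ne_zero ha3 hb)) (mul_ne_zero ha2 hb2)) (mul_ne_zero ha hb3),
    div_eq_div_iff (mul_ne_zero hb3 hab) (mul_ne_zero (mul_ne_zero (mul_ne_zero (mul_ne_zero ha3 hab) (mul_ne_zero ha3 hb)) (mul_ne_zero ha2 hb2)) (mul_ne_zero ha hb3))]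
  ring

lemma integrableOn_polar_real_iff {E : Type*} [NormedAddCommGroup E] [NormedSpace ℝ E]
    (f : ℝ × ℝ → E) :
    Integrable f ↔
      IntegrableOn (fun p : ℝ × ℝ => p.1 • f (polarCoord.symm p)) polarCoord.target := by
  set B : ℝ × ℝ → ℝ × ℝ →L[ℝ] ℝ × ℝ := fun p =>
    LinearMap.toContinuousLinearMap (Matrix.toLin (Module.Basis.finTwoProd ℝ) (Module.Basis.finTwoProd ℝ)
      !![Real.cos p.2, -p.1 * Real.sin p.2; Real.sin p.2, p.1 * Real.cos p.2]) with hB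
  have A : ∀ p ∈ polarCoord.target,
      HasFDerivWithinAt polarCoord.symm (B p) polarCoord.target p :=
    fun p _ => (hasFDerivAt_polarCoord_symm p).hasFDerivWithinAt
  have B_det : ∀ p, (B p).det = p.1 := by
    intro p
    conv_rhs => rw [← one_mul p.1, ← cos_sq_add_sin_sq p.2]
    simp only [hB, neg_mul, LinearMap.det_toContinuousLinearMap, LinearMap.det_toLin,
      Matrix.det_fin_two_of, sub_neg_eq_add]
    ring
  have hinj : Set.InjOn polarCoord.symm polarCoord.target := by
    have := polarCoord.symm.injOn
    rwa [polarCoord.symm_source] at this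
  have himg : polarCoord.symm '' polarCoord.target = polarCoord.source :=
    polarCoord.symm_image_target_eq_source
  constructor
  · intro hf
    have h1 : IntegrableOn f (polarCoord.symm '' polarCoord.target) := by
      rw [himg]; exact hf.integrableOn
    rw [integrableOn_image_iff_integrableOn_abs_det_fderiv_smul volume
      polarCoord.open_target.measurableSet A hinj f] at h1
    refine h1.congr_fun (fun x hx => ?_) polarCoord.open_target.measurableSet
    beta_reduce
    rw [B_det, abs_of_pos hx.1]
  · intro h1
    have h2 : IntegrableOn (fun x => |(B x).det| • f (polarCoord.symm x)) polarCoord.target := by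
      refine h1.congr_fun (fun x hx => ?_) polarCoord.open_target.measurableSet
      rw [B_det, abs_of_pos hx.1]
    rw [← integrableOn_image_iff_integrableOn_abs_det_fderiv_smul volume
      polarCoord.open_target.measurableSet A hinj f, himg] at h2
    rw [← integrableOn_univ]
    exact h2.congr_set_ae polarCoord_source_ae_eq_univ.symm

lemma integrableOn_polar_complex_iff {E : Type*} [NormedAddCommGroup E] [NormedSpace ℝ E]
    (f : ℂ → E) :
    Integrable f ↔
      IntegrableOn (fun p : ℝ × ℝ => p.1 • f (Complex.polarCoord.symm p)) polarCoord.target := by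
  rw [← MeasurePreserving.integrable_comp_emb
    (Complex.volume_preserving_equiv_real_prod.symm)
    Complex.measurableEquivRealProd.symm.measurableEmbedding,
    integrableOn_polar_real_iff]
  rfl

lemma integrable_indicator_inv_norm :
    Integrable ((ball (0:ℂ) 2).indicator (fun w : ℂ => ‖w‖⁻¹)) := by
  rw [integrableOn_polar_complex_iff]
  have hmeas : AEStronglyMeasurable
      (fun p : ℝ × ℝ => p.1 • (ball (0:ℂ) 2).indicator (fun w : ℂ => ‖w‖⁻¹)
        (Complex.polarCoord.symm p)) (volume.restrict polarCoord.target) := by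
    refine (Measurable.aestronglyMeasurable ?_).restrict
    apply measurable_fst.smul
    refine Measurable.indicator ?_ measurableSet_ball |>.comp ?_
    · exact measurable_norm.inv
    · have : Continuous (fun p : ℝ × ℝ => Complex.polarCoord.symm p) := by
        simp_rw [Complex.polarCoord_symm_apply]
        continuity
      exact this.measurable
  refine Integrable.mono' (g := (Ioo (0:ℝ) 2 ×ˢ Ioo (-π) π).indicator (fun _ => (1:ℝ)))
    ?_ hmeas ?_
  · rw [integrable_indicator_iff (measurableSet_Ioo.prod measurableSet_Ioo)]
    refine integrableOn_const (ne_of_lt ?_)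
    rw [Measure.restrict_apply (measurableSet_Ioo.prod measurableSet_Ioo)]
    refine lt_of_le_of_lt (measure_mono Set.inter_subset_left) ?_
    rw [Measure.volume_eq_prod, Measure.prod_prod]
    exact ENNReal.mul_lt_top measure_Ioo_lt_top measure_Ioo_lt_top
  · filter_upwards [ae_restrict_mem polarCoord.open_target.measurableSet] with p hp
    have hp1 : 0 < p.1 := hp.1
    have habs : ‖Complex.polarCoord.symm p‖ = p.1 := by
      rw [Complex.norm_polarCoord_symm, abs_of_pos hp1]
    by_cases h2 : p.1 < 2
    · have hmem : Complex.polarCoord.symm p ∈ ball (0:ℂ) 2 := by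
        rw [mem_ball, Complex.dist_eq, sub_zero, habs]; exact h2
      rw [indicator_of_mem hmem]
      have : p.1 • ‖Complex.polarCoord.symm p‖⁻¹ = 1 := by
        rw [habs, smul_eq_mul, mul_inv_cancel₀ hp1.ne']
      rw [Real.norm_eq_abs, this]
      have hpmem : p ∈ Ioo (0:ℝ) 2 ×ˢ Ioo (-π) π := ⟨⟨hp1, h2⟩, hp.2⟩
      rw [indicator_of_mem hpmem]
      simp
    · have hmem : Complex.polarCoord.symm p ∉ ball (0:ℂ) 2 := by
        rw [mem_ball, Complex.dist_eq, sub_zero, habs]; exact h2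
      rw [indicator_of_notMem hmem]
      simp only [smul_zero, norm_zero]
      exact indicator_nonneg (fun _ _ => zero_le_one) _

lemma integrableOn_f (z : ℂ) (hz : z ∈ ball (0 : ℂ) 1) :
    IntegrableOn (fun ζ : ℂ => (conj ζ * z) / (ζ * (ζ - z))) (ball (0:ℂ) 1) := by
  have hmeas : Measurable (fun ζ : ℂ => (conj ζ * z) / (ζ * (ζ - z))) := by
    have h1 : Measurable (fun ζ : ℂ => conj ζ * z) :=
      (Complex.continuous_conj.measurable).mul_const z
    exact h1.div (measurable_id.mul (measurable_id.sub measurable_const))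
  have hG : Integrable (fun ζ : ℂ => ‖z‖ * ((ball (0:ℂ) 2).indicator (fun w : ℂ => ‖w‖⁻¹) (ζ - z))) := by
    exact ((integrable_indicator_inv_norm.comp_sub_right z).const_mul _)
  refine Integrable.mono' hG.integrableOn (hmeas.aestronglyMeasurable.restrict) ?_
  filter_upwards [ae_restrict_mem measurableSet_ball] with ζ hζ
  rcases eq_or_ne ζ 0 with rfl | h0
  · simp only [map_zero, zero_mul, zero_div]
    rw [norm_zero]
    exact mul_nonneg (norm_nonneg _) (indicator_nonneg (fun w _ => inv_nonneg.2 (norm_nonneg _)) _)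
  rcases eq_or_ne ζ z with rfl | hzz
  · simp only [sub_self, mul_zero, div_zero, norm_zero]
    exact mul_nonneg (norm_nonneg _) (indicator_nonneg (fun w _ => inv_nonneg.2 (norm_nonneg _)) _)
  have hmem : ζ - z ∈ ball (0:ℂ) 2 := by
    rw [mem_ball, dist_zero_right]
    calc ‖ζ - z‖ ≤ ‖ζ‖ + ‖z‖ := norm_sub_le _ _
    _ < 1 + 1 := by
        apply add_lt_add
        · simpa [mem_ball, dist_zero_right] using hζ
        · simpa [mem_ball, dist_zero_right] using hz
    _ = 2 := by norm_num
  rw [indicator_of_mem hmem]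
  rw [norm_div, norm_mul, norm_mul, Complex.norm_conj]
  have hpos : 0 < ‖ζ‖ * ‖ζ - z‖ :=
    mul_pos (norm_pos_iff.mpr h0) (norm_pos_iff.mpr (sub_ne_zero.2 hzz))
  rw [div_le_iff₀ hpos]
  have h1 : ‖z‖ * ((‖ζ - z‖)⁻¹) * (‖ζ‖ * ‖ζ - z‖)
      = ‖ζ‖ * ‖z‖ := by
    field_simp [norm_ne_zero_iff.mpr (sub_ne_zero.2 hzz)]
  calc ‖ζ‖ * ‖z‖
      = ‖z‖ * (‖ζ - z‖)⁻¹ * (‖ζ‖ * ‖ζ - z‖) := h1.symm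
    _ ≤ _ := le_rfl

lemma circle_val (z : ℂ) (hz0 : z ≠ 0) {r : ℝ} (hr : 0 < r) (hne : r ≠ ‖z‖) :
    (∮ w in C(0, r), -Complex.I * (r:ℂ)^3 * z / (w^3 * (w - z)))
      = if r < ‖z‖ then -2*(π:ℂ)*(r:ℂ)^3/z^2 else 0 := by
  have hz3 : z^3 ≠ 0 := pow_ne_zero _ hz0
  have hw0 : ∀ w ∈ sphere (0:ℂ) r, w ≠ 0 := by
    intro w hw h
    rw [mem_sphere_zero_iff_norm, h, norm_zero] at hw
    exact hr.ne' hw.symm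
  have hwz : ∀ w ∈ sphere (0:ℂ) r, w ≠ z := by
    intro w hw h
    rw [mem_sphere_zero_iff_norm, h] at hw
    exact hne hw.symm
  have h1 : (∮ w in C(0, r), -Complex.I * (r:ℂ)^3 * z / (w^3 * (w - z)))
      = (-Complex.I * (r:ℂ)^3 * z) * ∮ w in C(0, r), (w^3 * (w - z))⁻¹ := by
    rw [← circleIntegral.integral_const_mul]
    refine circleIntegral.integral_congr hr.le (fun w _ => ?_)
    rw [div_eq_mul_inv]
  have h2 : (∮ w in C(0, r), (w^3 * (w - z))⁻¹)
      = ∮ w in C(0, r), ((1/z^3) * (w - z)⁻¹ - (1/z^3) * (w - 0)⁻¹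
          - (1/z^2) * (w - 0)^(-2:ℤ) - (1/z) * (w - 0)^(-3:ℤ)) := by
    refine circleIntegral.integral_congr hr.le (fun w hw => ?_)
    have h0 := hw0 w hw
    have hz' := sub_ne_zero.2 (hwz w hw)
    simp only [sub_zero, zpow_neg, zpow_ofNat]
    exact partial_frac z w hz0 h0 hz'
  have hcsub : ContinuousOn (fun w : ℂ => (w - z)⁻¹) (sphere (0:ℂ) r) :=
    ContinuousOn.inv₀ ((continuousOn_id.sub continuousOn_const))
      (fun w hw => sub_ne_zero.2 (hwz w hw))
  have hcinv : ContinuousOn (fun w : ℂ => (w - 0)⁻¹) (sphere (0:ℂ) r) :=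
    ContinuousOn.inv₀ ((continuousOn_id.sub continuousOn_const))
      (fun w hw => by simpa using hw0 w hw)
  have hczp2 : ContinuousOn (fun w : ℂ => (w - 0)^(-2:ℤ)) (sphere (0:ℂ) r) := by
    apply ContinuousOn.zpow₀ ((continuousOn_id.sub continuousOn_const))
    intro w hw
    exact Or.inl (by simpa using hw0 w hw)
  have hczp3 : ContinuousOn (fun w : ℂ => (w - 0)^(-3:ℤ)) (sphere (0:ℂ) r) := by
    apply ContinuousOn.zpow₀ ((continuousOn_id.sub continuousOn_const))
    intro w hw
    exact Or.inl (by simpa using hw0 w hw)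
  have hI1 : CircleIntegrable (fun w : ℂ => (1/z^3) * (w - z)⁻¹) 0 r :=
    (continuousOn_const.mul hcsub).circleIntegrable hr.le
  have hI2 : CircleIntegrable (fun w : ℂ => (1/z^3) * (w - 0)⁻¹) 0 r :=
    (continuousOn_const.mul hcinv).circleIntegrable hr.le
  have hI3 : CircleIntegrable (fun w : ℂ => (1/z^2) * (w - 0)^(-2:ℤ)) 0 r :=
    (continuousOn_const.mul hczp2).circleIntegrable hr.le
  have hI4 : CircleIntegrable (fun w : ℂ => (1/z) * (w - 0)^(-3:ℤ)) 0 r :=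
    (continuousOn_const.mul hczp3).circleIntegrable hr.le
  have hI12 : CircleIntegrable (fun w : ℂ => (1/z^3) * (w - z)⁻¹ - (1/z^3) * (w - 0)⁻¹) 0 r :=
    ((continuousOn_const.mul hcsub).sub (continuousOn_const.mul hcinv)).circleIntegrable hr.le
  have hI123 : CircleIntegrable (fun w : ℂ => (1/z^3) * (w - z)⁻¹ - (1/z^3) * (w - 0)⁻¹
      - (1/z^2) * (w - 0)^(-2:ℤ)) 0 r :=
    (((continuousOn_const.mul hcsub).sub (continuousOn_const.mul hcinv)).sub
      (continuousOn_const.mul hczp2)).circleIntegrable hr.le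
  have h3 : (∮ w in C(0, r), ((1/z^3) * (w - z)⁻¹ - (1/z^3) * (w - 0)⁻¹
          - (1/z^2) * (w - 0)^(-2:ℤ) - (1/z) * (w - 0)^(-3:ℤ)))
      = (1/z^3) * (∮ w in C(0, r), (w - z)⁻¹) - (1/z^3) * (2*π*Complex.I) := by
    rw [circleIntegral.integral_sub hI123 hI4, circleIntegral.integral_sub hI12 hI3,
        circleIntegral.integral_sub hI1 hI2,
        circleIntegral.integral_const_mul, circleIntegral.integral_const_mul,
        circleIntegral.integral_const_mul, circleIntegral.integral_const_mul]
    rw [circleIntegral.integral_sub_inv_of_mem_ball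
          (by simpa using hr : (0:ℂ) ∈ ball (0:ℂ) r),
        circleIntegral.integral_sub_zpow_of_ne (by decide) 0 0 r,
        circleIntegral.integral_sub_zpow_of_ne (by decide) 0 0 r]
    ring
  rcases lt_or_gt_of_ne hne with hlt | hgt
  · have hout : (∮ w in C(0, r), (w - z)⁻¹) = 0 := by
      apply Complex.circleIntegral_eq_zero_of_differentiable_on_off_countable hr.le
        Set.countable_empty
      · intro w hw
        apply ContinuousWithinAt.inv₀
        · exact (continuous_id.sub continuous_const).continuousWithinAt
        · refine sub_ne_zero.2 (fun h => ?_)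
          rw [mem_closedBall, Complex.dist_eq, sub_zero, h] at hw
          exact absurd hw (not_le.2 hlt)
      · intro w hw
        refine DifferentiableAt.inv (differentiableAt_id.sub_const z) ?_
        refine sub_ne_zero.2 (fun h => ?_)
        rw [mem_diff, mem_ball, Complex.dist_eq, sub_zero, h] at hw
        exact absurd hw.1 (not_lt.2 hlt.le)
    rw [h1, h2, h3, hout, if_pos hlt]
    have hI2' : Complex.I * Complex.I = -1 := Complex.I_mul_I
    field_simp
    ring_nf
    rw [Complex.I_sq]
    ring
  · have hin : (∮ w in C(0, r), (w - z)⁻¹) = 2*π*Complex.I := by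
      apply circleIntegral.integral_sub_inv_of_mem_ball
      rw [mem_ball, Complex.dist_eq, sub_zero]
      exact hgt
    rw [h1, h2, h3, hin, if_neg (not_lt.2 hgt.le)]
    ring

lemma symm_circleMap (r θ : ℝ) : Complex.polarCoord.symm (r, θ) = circleMap 0 r θ := by
  simp [circleMap, Complex.exp_mul_I, Complex.polarCoord_symm_apply]

lemma inner_val (z : ℂ) (hz0 : z ≠ 0) {r : ℝ} (hr : 0 < r) (hne : r ≠ ‖z‖) :
    (∫ θ in Ioo (-π) π, r • ((conj (Complex.polarCoord.symm (r, θ)) * z) /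
        (Complex.polarCoord.symm (r, θ) * (Complex.polarCoord.symm (r, θ) - z))))
      = if r < ‖z‖ then -2*(π:ℂ)*(r:ℂ)^3/z^2 else 0 := by
  simp only [symm_circleMap]
  have hG : Function.Periodic (fun θ : ℝ => r • ((conj (circleMap 0 r θ) * z) /
      (circleMap 0 r θ * (circleMap 0 r θ - z)))) (2*π) := by
    intro θ
    simp only [(periodic_circleMap 0 r) θ]
  rw [← integral_Ioc_eq_integral_Ioo,
    ← intervalIntegral.integral_of_le (by linarith [Real.pi_pos] : (-π:ℝ) ≤ π)]
  have hshift := hG.intervalIntegral_add_eq (-π) 0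
  rw [show (-π) + 2*π = π by ring, zero_add] at hshift
  rw [hshift]
  have hcirc : (∮ w in C(0, r), -Complex.I * (r:ℂ)^3 * z / (w^3 * (w - z)))
      = ∫ θ in (0:ℝ)..(2*π), r • ((conj (circleMap 0 r θ) * z) /
          (circleMap 0 r θ * (circleMap 0 r θ - z))) := by
    rw [circleIntegral]
    refine intervalIntegral.integral_congr (fun θ _ => ?_)
    have hw0 : circleMap 0 r θ ≠ 0 := circleMap_ne_center hr.ne'
    have habs : ‖circleMap 0 r θ‖ = r := by
      rw [norm_circleMap_zero, abs_of_pos hr]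
    have hwz : circleMap 0 r θ - z ≠ 0 := by
      refine sub_ne_zero.2 (fun h => hne ?_)
      rw [h] at habs; exact habs.symm
    have hconj : conj (circleMap 0 r θ) = ((r:ℂ))^2 / circleMap 0 r θ := by
      rw [eq_div_iff hw0, mul_comm, Complex.mul_conj, Complex.normSq_eq_norm_sq, habs]
      push_cast; ring
    rw [deriv_circleMap, smul_eq_mul, Complex.real_smul, hconj]
    field_simp
    ring_nf
    rw [Complex.I_sq]
    ring
  rw [← hcirc, circle_val z hz0 hr hne]

end aux

theorem stmt_4 (z : ℂ) (hz : z ∈ ball (0 : ℂ) 1) (hz0 : z ≠ 0) :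
    (1 / (Real.pi : ℂ)) *
      ∫ ζ in ball (0 : ℂ) 1, (conj ζ * z) / (ζ * (ζ - z)) =
    -(conj z) ^ 2 / 2 := by
  classical
  have hπ : (Real.pi : ℝ) ≠ 0 := Real.pi_ne_zero
  have haz1 : ‖z‖ < 1 := by
    simpa [mem_ball, Complex.dist_eq] using hz
  have haz0 : 0 < ‖z‖ := norm_pos_iff.mpr hz0
  set f : ℂ → ℂ := fun ζ => (conj ζ * z) / (ζ * (ζ - z)) with hf
  have hint : IntegrableOn f (ball (0:ℂ) 1) := integrableOn_f z hz
  have hg : Integrable ((ball (0:ℂ) 1).indicator f) :=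
    (integrable_indicator_iff measurableSet_ball).2 hint
  have h2 := Complex.integral_comp_polarCoord_symm ((ball (0:ℂ) 1).indicator f)
  have hEq1 : ∫ ζ, (ball (0:ℂ) 1).indicator f ζ = ∫ ζ in ball (0:ℂ) 1, f ζ :=
    integral_indicator measurableSet_ball
  have key : (polarCoord.target).indicator
        (fun p : ℝ×ℝ => p.1 • (ball (0:ℂ) 1).indicator f (Complex.polarCoord.symm p))
      = (Set.Ioo (0:ℝ) 1 ×ˢ Set.Ioo (-Real.pi) Real.pi).indicator
        (fun p : ℝ×ℝ => p.1 • f (Complex.polarCoord.symm p)) := by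
    funext p
    by_cases hp : p ∈ polarCoord.target
    · rw [Set.indicator_of_mem hp]
      have habs : ‖Complex.polarCoord.symm p‖ = p.1 := by
        rw [Complex.norm_polarCoord_symm, abs_of_pos hp.1]
      have hp1 : 0 < p.1 := hp.1
      by_cases h1 : p.1 < 1
      · have hmem : Complex.polarCoord.symm p ∈ ball (0:ℂ) 1 := by
          rw [mem_ball, Complex.dist_eq, sub_zero, habs]; exact h1
        have hpmem : p ∈ Set.Ioo (0:ℝ) 1 ×ˢ Set.Ioo (-Real.pi) Real.pi := ⟨⟨hp1, h1⟩, hp.2⟩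
        rw [Set.indicator_of_mem hmem, Set.indicator_of_mem hpmem]
      · have hmem : Complex.polarCoord.symm p ∉ ball (0:ℂ) 1 := by
          rw [mem_ball, Complex.dist_eq, sub_zero, habs]; exact h1
        rw [Set.indicator_of_notMem hmem, smul_zero, Set.indicator_of_notMem]
        intro hmem'
        exact h1 hmem'.1.2
    · rw [Set.indicator_of_notMem hp, Set.indicator_of_notMem]
      intro hmem'
      have hpmem : p ∈ polarCoord.target := ⟨hmem'.1.1, hmem'.2⟩
      exact hp hpmem
  have h3 : (∫ p in polarCoord.target,
        p.1 • (ball (0:ℂ) 1).indicator f (Complex.polarCoord.symm p))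
      = ∫ p in Set.Ioo (0:ℝ) 1 ×ˢ Set.Ioo (-Real.pi) Real.pi,
          p.1 • f (Complex.polarCoord.symm p) := by
    rw [← integral_indicator polarCoord.open_target.measurableSet, key,
      integral_indicator (measurableSet_Ioo.prod measurableSet_Ioo)]
  have hIprod : IntegrableOn (fun p : ℝ×ℝ => p.1 • f (Complex.polarCoord.symm p))
      (Set.Ioo (0:ℝ) 1 ×ˢ Set.Ioo (-Real.pi) Real.pi) := by
    have hsub : (Set.Ioo (0:ℝ) 1 ×ˢ Set.Ioo (-Real.pi) Real.pi) ⊆ polarCoord.target := by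
      intro p hp
      exact ⟨hp.1.1, hp.2⟩
    have h' := ((integrableOn_polar_complex_iff ((ball (0:ℂ) 1).indicator f)).1 hg).mono_set hsub
    refine h'.congr_fun (fun p hp => ?_) (measurableSet_Ioo.prod measurableSet_Ioo)
    have habs : ‖Complex.polarCoord.symm p‖ = p.1 := by
      rw [Complex.norm_polarCoord_symm, abs_of_pos hp.1.1]
    have hmem : Complex.polarCoord.symm p ∈ ball (0:ℂ) 1 := by
      rw [mem_ball, Complex.dist_eq, sub_zero, habs]; exact hp.1.2
    beta_reduce
    rw [Set.indicator_of_mem hmem]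
  have h4 : (∫ p in Set.Ioo (0:ℝ) 1 ×ˢ Set.Ioo (-Real.pi) Real.pi,
        p.1 • f (Complex.polarCoord.symm p))
      = ∫ r in Set.Ioo (0:ℝ) 1, ∫ θ in Set.Ioo (-Real.pi) Real.pi,
          r • f (Complex.polarCoord.symm (r, θ)) := by
    rw [Measure.volume_eq_prod] at hIprod ⊢
    exact setIntegral_prod _ hIprod
  have h5 : (∫ r in Set.Ioo (0:ℝ) 1, ∫ θ in Set.Ioo (-Real.pi) Real.pi,
        r • f (Complex.polarCoord.symm (r, θ)))
      = ∫ r in Set.Ioo (0:ℝ) 1,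
          (if r < ‖z‖ then -2*(Real.pi:ℂ)*(r:ℂ)^3/z^2 else 0) := by
    refine setIntegral_congr_ae measurableSet_Ioo ?_
    have hae : ∀ᵐ r : ℝ, r ≠ ‖z‖ := by
      rw [ae_iff]
      simp only [not_not, Set.setOf_eq_eq_singleton]
      exact measure_singleton _
    filter_upwards [hae] with r hr hrI
    exact inner_val z hz0 hrI.1 hr
  have h6 : (∫ r in Set.Ioo (0:ℝ) 1,
        (if r < ‖z‖ then -2*(Real.pi:ℂ)*(r:ℂ)^3/z^2 else 0))
      = -(Real.pi:ℂ) * (‖z‖:ℂ)^4 / (2 * z^2) := by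
    have hind : (fun r : ℝ => (if r < ‖z‖ then -2*(Real.pi:ℂ)*(r:ℂ)^3/z^2 else 0))
        = (Set.Iio (‖z‖)).indicator (fun r : ℝ => -2*(Real.pi:ℂ)*(r:ℂ)^3/z^2) := by
      funext r
      by_cases h : r < ‖z‖
      · rw [if_pos h, Set.indicator_of_mem (Set.mem_Iio.2 h)]
      · rw [if_neg h, Set.indicator_of_notMem (by simpa using h)]
    rw [hind, setIntegral_indicator measurableSet_Iio]
    have hseteq : Set.Ioo (0:ℝ) 1 ∩ Set.Iio (‖z‖) = Set.Ioo 0 (‖z‖) := by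
      ext r
      simp only [Set.mem_inter_iff, Set.mem_Ioo, Set.mem_Iio]
      constructor
      · rintro ⟨⟨h1, _⟩, h3⟩; exact ⟨h1, h3⟩
      · rintro ⟨h1, h3⟩; exact ⟨⟨h1, h3.trans haz1⟩, h3⟩
    rw [hseteq, ← integral_Ioc_eq_integral_Ioo,
      ← intervalIntegral.integral_of_le haz0.le]
    have : (∫ r in (0:ℝ)..(‖z‖), -2*(Real.pi:ℂ)*(r:ℂ)^3/z^2)
        = (-2*(Real.pi:ℂ)/z^2) * ∫ r in (0:ℝ)..(‖z‖), ((r^3 : ℝ) : ℂ) := by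
      rw [← intervalIntegral.integral_const_mul]
      refine intervalIntegral.integral_congr (fun r _ => ?_)
      push_cast
      ring
    rw [this]
    rw [intervalIntegral.integral_ofReal]
    rw [integral_pow]
    push_cast
    field_simp
    ring
  rw [hf] at hEq1 h2 ⊢
  rw [← hEq1, ← h2, h3, h4, h5, h6]
  have habs4 : ((‖z‖ : ℝ) : ℂ)^4 = z^2 * (conj z)^2 := by
    have h1 : ((‖z‖ : ℝ) : ℂ)^2 = z * conj z := by
      rw [Complex.mul_conj, Complex.normSq_eq_norm_sq]
      push_cast
      ring
    calc ((‖z‖ : ℝ) : ℂ)^4 = (((‖z‖ : ℝ) : ℂ)^2)^2 := by ring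
      _ = (z * conj z)^2 := by rw [h1]
      _ = z^2 * (conj z)^2 := by ring
  rw [habs4]
  have hπC : (Real.pi : ℂ) ≠ 0 := by exact_mod_cast hπ
  field_simp
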